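/- In the coordinate model of the RBB iteration, let k ≥ 1 and let i ∈ {1,…,n} be such that e_i^k is in fluctuation mode, i.e. Σ_{j=1}^n (λ_j − λ_i)·(e_j^{k-1})²·λ_j²·(1+τ_{k-1}λ_j²) < 0, and suppose in addition that (e_i^{k-1})²·λ_i²·(1+τ_{k-1}λ_i²) ≥ Σ_{j=1}^{i-1} (e_j^{k-1})²·λ_j²·(1+τ_{k-1}λ_j²). Then |e_i^{k+1}| ≤ (1 − λ_1/λ_n)·|e_i^k|. -/

import Mathlib

/-!
With weights `w_j = (e_j^k)² λ_j² (1 + τ_k λ_j²)`, the step size `α_{k+1}` is the `w`-weighted mean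
of the `λ_j`, and fluctuation mode says exactly that `α_{k+1} < λ_i`, so that
`|1 - λ_i / α_{k+1}| = (λ_i S - A) / A` with `S = Σ w_j`, `A = Σ λ_j w_j`. Only the indices `j < i`
contribute positively to `λ_i S - A = Σ (λ_i - λ_j) w_j`, and by the dominance hypothesis their
contribution is at most `(λ_i - λ_1) w_i ≤ (1 - λ_1/λ_n) λ_i w_i ≤ (1 - λ_1/λ_n) A`.
-/

open Finset

section WeightedMean

variable {ι : Type*} [Fintype ι] {μ w : ι → ℝ} {m : ℝ} {i : ι}

theorem sum_mul_pos_of_sum_mul_lt (hw : ∀ j, 0 ≤ w j) (hm₀ : 0 < m) (hm : ∀ j, m ≤ μ j)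
    (hlt : ∑ j, μ j * w j < μ i * ∑ j, w j) : 0 < ∑ j, μ j * w j := by
  have hS : 0 ≤ ∑ j, w j := sum_nonneg fun j _ => hw j
  have hmS : m * ∑ j, w j ≤ ∑ j, μ j * w j := by
    rw [mul_sum]
    exact sum_le_sum fun j _ => mul_le_mul_of_nonneg_right (hm j) (hw j)
  have hS_pos : 0 < ∑ j, w j := by
    refine hS.lt_of_ne fun hS0 => ?_
    rw [← hS0] at hmS hlt
    linarith
  exact lt_of_lt_of_le (mul_pos hm₀ hS_pos) hmS

variable [LinearOrder ι]

theorem sum_sub_mul_le_of_dominates_lower (hμ : Monotone μ) (hw : ∀ j, 0 ≤ w j)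
    (hm : ∀ j, m ≤ μ j) (hdom : ∑ j ∈ univ.filter (fun j => j < i), w j ≤ w i) :
    ∑ j, (μ i - μ j) * w j ≤ (μ i - m) * w i := by
  rw [← sum_filter_add_sum_filter_not univ (fun j => j < i)]
  have hlower : ∑ j ∈ univ.filter (fun j => j < i), (μ i - μ j) * w j ≤
      (μ i - m) * ∑ j ∈ univ.filter (fun j => j < i), w j := by
    rw [mul_sum]
    exact sum_le_sum fun j _ => mul_le_mul_of_nonneg_right (by linarith [hm j]) (hw j)
  have hupper : ∑ j ∈ univ.filter (fun j => ¬j < i), (μ i - μ j) * w j ≤ 0 := by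
    refine sum_nonpos fun j hj => mul_nonpos_of_nonpos_of_nonneg ?_ (hw j)
    have hij : i ≤ j := not_lt.mp (mem_filter.mp hj).2
    linarith [hμ hij]
  have hdom' := mul_le_mul_of_nonneg_left hdom (sub_nonneg.mpr (hm i))
  linarith

theorem mul_sum_sub_sum_mul_le (hμ : Monotone μ) (hw : ∀ j, 0 ≤ w j) (hm₀ : 0 ≤ m)
    (hm : ∀ j, m ≤ μ j) {M : ℝ} (hM : μ i ≤ M)
    (hdom : ∑ j ∈ univ.filter (fun j => j < i), w j ≤ w i) :
    μ i * ∑ j, w j - ∑ j, μ j * w j ≤ (1 - m / M) * ∑ j, μ j * w j := by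
  have hμw : ∀ j, 0 ≤ μ j * w j := fun j => mul_nonneg (hm₀.trans (hm j)) (hw j)
  have hM₀ : 0 ≤ M := hm₀.trans ((hm i).trans hM)
  have hratio : μ i / M ≤ 1 := div_le_one_of_le₀ hM hM₀
  calc μ i * ∑ j, w j - ∑ j, μ j * w j = ∑ j, (μ i - μ j) * w j := by
        rw [mul_sum, ← sum_sub_distrib]
        exact sum_congr rfl fun j _ => by ring
    _ ≤ (μ i - m) * w i := sum_sub_mul_le_of_dominates_lower hμ hw hm hdom
    _ ≤ (1 - m / M) * (μ i * w i) := by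
        have : m * (μ i / M) ≤ m := mul_le_of_le_one_right hm₀ hratio
        have hexp : (1 - m / M) * (μ i * w i) = (μ i - m * (μ i / M)) * w i := by ring
        rw [hexp]
        exact mul_le_mul_of_nonneg_right (by linarith) (hw i)
    _ ≤ (1 - m / M) * ∑ j, μ j * w j := by
        have : 0 ≤ 1 - m / M := sub_nonneg.mpr (div_le_one_of_le₀ ((hm i).trans hM) hM₀)
        exact mul_le_mul_of_nonneg_left (single_le_sum (fun j _ => hμw j) (mem_univ i)) this

end WeightedMean

theorem abs_one_sub_div_div_le {A S μ ρ : ℝ} (hA : 0 < A) (hlt : A < μ * S)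
    (h : μ * S - A ≤ ρ * A) : |1 - μ / (A / S)| ≤ ρ := by
  rw [div_div_eq_mul_div, abs_of_nonpos (by rw [sub_nonpos, one_le_div hA]; exact hlt.le),
    neg_sub, sub_le_iff_le_add, div_le_iff₀ hA]
  linarith

def rbbWeight {ι : Type*} (lam : ι → ℝ) (t : ℝ) (x : ι → ℝ) (j : ι) : ℝ :=
  x j ^ 2 * lam j ^ 2 * (1 + t * lam j ^ 2)

theorem rbbWeight_nonneg {ι : Type*} (lam : ι → ℝ) {t : ℝ} (ht : 0 ≤ t) (x : ι → ℝ) (j : ι) :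
    0 ≤ rbbWeight lam t x j := by
  unfold rbbWeight
  positivity

theorem rbb_coordinate_fluctuation_mode_general
    (n : ℕ) (lam : Fin (n + 1) → ℝ) (hpos : 0 < lam 0) (hmono : Monotone lam)
    (T : ℝ)
    (e : ℕ → Fin (n + 1) → ℝ) (α τ : ℕ → ℝ)
    (hτ : ∀ k, 0 ≤ τ k ∧ τ k ≤ T)
    (hrec : ∀ k i, e (k + 1) i = (1 - lam i / α k) * e k i)
    (hα : ∀ k, α (k + 1) =
      (∑ i, lam i ^ 3 * (1 + τ k * lam i ^ 2) * e k i ^ 2) /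
      (∑ i, lam i ^ 2 * (1 + τ k * lam i ^ 2) * e k i ^ 2)) :
    ∀ (k : ℕ) (i : Fin (n + 1)),
      (∑ j, (lam j - lam i) * e k j ^ 2 * lam j ^ 2 * (1 + τ k * lam j ^ 2)) < 0 →
      (∑ j ∈ Finset.univ.filter (fun j => j < i),
          e k j ^ 2 * lam j ^ 2 * (1 + τ k * lam j ^ 2)) ≤
        e k i ^ 2 * lam i ^ 2 * (1 + τ k * lam i ^ 2) →
      |e (k + 2) i| ≤ (1 - lam 0 / lam (Fin.last n)) * |e (k + 1) i| := by
  intro k i hfluc hdom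
  set w := rbbWeight lam (τ k) (e k)
  have hw : ∀ j, 0 ≤ w j := rbbWeight_nonneg lam (hτ k).1 (e k)
  have hlam : ∀ j, lam 0 ≤ lam j := fun j => hmono (Fin.zero_le j)
  have hmean : α (k + 1) = (∑ j, lam j * w j) / ∑ j, w j := by
    rw [hα k]
    congr 1 <;> exact sum_congr rfl fun j _ => by simp only [w, rbbWeight]; ring
  have hlt : ∑ j, lam j * w j < lam i * ∑ j, w j := by
    have : ∑ j, lam j * w j - lam i * ∑ j, w j =
        ∑ j, (lam j - lam i) * e k j ^ 2 * lam j ^ 2 * (1 + τ k * lam j ^ 2) := by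
      rw [mul_sum, ← sum_sub_distrib]
      exact sum_congr rfl fun j _ => by simp only [w, rbbWeight]; ring
    linarith
  have hbound := mul_sum_sub_sum_mul_le hmono hw hpos.le hlam (hmono (Fin.le_last i)) hdom
  rw [hrec (k + 1) i, abs_mul, hmean]
  gcongr
  exact abs_one_sub_div_div_le (sum_mul_pos_of_sum_mul_lt hw hpos hlam hlt) hlt hbound

/-- In the coordinate model of the RBB iteration, if at step `k+1 ≥ 1`
the component `i` is in fluctuation mode, i.e.
`Σ_j (λ_j − λ_i)(e_j^k)²λ_j²(1+τ_kλ_j²) < 0`, and moreover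
`(e_i^k)²λ_i²(1+τ_kλ_i²) ≥ Σ_{j<i} (e_j^k)²λ_j²(1+τ_kλ_j²)`, then
`|e_i^{k+2}| ≤ (1 − λ_1/λ_n)|e_i^{k+1}|`. -/
theorem rbb_coordinate_fluctuation_mode
    (n : ℕ) (lam : Fin (n + 1) → ℝ) (hpos : 0 < lam 0) (hmono : Monotone lam)
    (T : ℝ) (hT : 0 ≤ T)
    (e : ℕ → Fin (n + 1) → ℝ) (α τ : ℕ → ℝ)
    (hτ : ∀ k, 0 ≤ τ k ∧ τ k ≤ T)
    (hα0 : lam 0 ≤ α 0 ∧ α 0 ≤ lam (Fin.last n))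
    (he : ∀ k, e k ≠ 0)
    (hrec : ∀ k i, e (k + 1) i = (1 - lam i / α k) * e k i)
    (hα : ∀ k, α (k + 1) =
      (∑ i, lam i ^ 3 * (1 + τ k * lam i ^ 2) * e k i ^ 2) /
      (∑ i, lam i ^ 2 * (1 + τ k * lam i ^ 2) * e k i ^ 2)) :
    ∀ (k : ℕ) (i : Fin (n + 1)),
      (∑ j, (lam j - lam i) * e k j ^ 2 * lam j ^ 2 * (1 + τ k * lam j ^ 2)) < 0 →
      (∑ j ∈ Finset.univ.filter (fun j => j < i),
          e k j ^ 2 * lam j ^ 2 * (1 + τ k * lam j ^ 2)) ≤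
        e k i ^ 2 * lam i ^ 2 * (1 + τ k * lam i ^ 2) →
      |e (k + 2) i| ≤ (1 - lam 0 / lam (Fin.last n)) * |e (k + 1) i| :=
  rbb_coordinate_fluctuation_mode_general n lam hpos hmono T e α τ hτ hrec hα
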